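/- Let μ be a fixed probability distribution on Y and let {I(y,y'')}_{y,y''∈Y} be integrable real random variables (independent of θ) with E[I(y,y'')] = P(y,y'') for all y, y''. Define the population IPO loss L̂(θ) = E_{(y,y') ∼ Uniform(Y)×Uniform(Y), y'' ∼ μ} [ ( log(π_θ(y) π_ref(y') / (π_θ(y') π_ref(y))) − (I(y,y'') − I(y',y''))/β )² ], where the expectation is over the samples y, y', y'' but not over the randomness of I. Then E[∇_θ L̂(θ)] = ∇_θ L_IPO(θ; Uniform(Y)×Uniform(Y), μ), where the outer expectation is over the randomness of I. -/

import Mathlib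

open Real

/-- Tabular softmax policy. -/
noncomputable def softmax {Y : Type*} [Fintype Y] (θ : Y → ℝ) : Y → ℝ :=
  fun y => Real.exp (θ y) / ∑ y', Real.exp (θ y')

/-- Kullback–Leibler divergence between distributions on a finite set. -/
noncomputable def KLdiv {Y : Type*} [Fintype Y] (p q : Y → ℝ) : ℝ :=
  ∑ y, p y * Real.log (p y / q y)

/-- `(P π)(y) = ∑ y' P(y, y') π(y')`. -/
noncomputable def matVec {Y : Type*} [Fintype Y] (P : Y → Y → ℝ) (p : Y → ℝ) : Y → ℝ :=
  fun y => ∑ y', P y y' * p y'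

/-- Generalized IPO loss with sampling distribution `Uniform(Y) × Uniform(Y)` and fixed
comparison distribution `μdist` (not differentiated through). -/
noncomputable def LIPO {Y : Type*} [Fintype Y] (P : Y → Y → ℝ) (β : ℝ) (θref : Y → ℝ)
    (μdist : Y → ℝ) (θ : Y → ℝ) : ℝ :=
  ((Fintype.card Y : ℝ)⁻¹) ^ 2 * ∑ y, ∑ y',
    (Real.log (softmax θ y * softmax θref y' / (softmax θ y' * softmax θref y))
      - β⁻¹ * ∑ y'', μdist y'' * (P y y'' - P y' y'')) ^ 2

/-- Population IPO loss built from the (random) unbiased estimators `I` of the preference: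
the expectation is over the samples `(y, y') ∼ Uniform(Y) × Uniform(Y)` and `y'' ∼ μdist`. -/
noncomputable def LhatIPO {Y : Type*} [Fintype Y] (β : ℝ) (θref : Y → ℝ) (μdist : Y → ℝ)
    (I : Y → Y → ℝ) (θ : Y → ℝ) : ℝ :=
  ((Fintype.card Y : ℝ)⁻¹) ^ 2 * ∑ y, ∑ y', ∑ y'', μdist y'' *
    (Real.log (softmax θ y * softmax θref y' / (softmax θ y' * softmax θref y))
      - (I y y'' - I y' y'') / β) ^ 2

/-!
Since the weights `μdist` sum to one, `∑ μ(y'') (m - t(y''))² = (m - ∑ μ(y'') t(y''))² + Var_μ(t)`.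
Hence the population loss built from any preference estimate `J` differs from `LIPO J` by a
term that does not depend on `θ`, and the two have the same gradient. The gradient of `LIPO J` is
affine in `J`, so its expectation over the randomness of `I` is the gradient of `LIPO P`.
-/

lemma Finset.sum_mul_sub_sq_eq {ι : Type*} (s : Finset ι) (w t : ι → ℝ)
    (hw : ∑ i ∈ s, w i = 1) (m : ℝ) :
    ∑ i ∈ s, w i * (m - t i) ^ 2 =
      (m - ∑ i ∈ s, w i * t i) ^ 2 + (∑ i ∈ s, w i * t i ^ 2 - (∑ i ∈ s, w i * t i) ^ 2) := by
  have hexpand : ∀ i, w i * (m - t i) ^ 2 = m ^ 2 * w i - 2 * m * (w i * t i) + w i * t i ^ 2 :=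
    fun i => by ring
  simp only [hexpand, Finset.sum_add_distrib, Finset.sum_sub_distrib, ← Finset.mul_sum, hw]
  ring

section IPOLoss

open MeasureTheory

variable {Y : Type*} [Fintype Y]

noncomputable def ipoMargin (θref θ : Y → ℝ) (y y' : Y) : ℝ :=
  Real.log (softmax θ y * softmax θref y' / (softmax θ y' * softmax θref y))

noncomputable def ipoTarget (β : ℝ) (μdist : Y → ℝ) (J : Y → Y → ℝ) (y y' : Y) : ℝ :=
  β⁻¹ * ∑ y'', μdist y'' * (J y y'' - J y' y'')

lemma sum_exp_pos (θ : Y → ℝ) (y : Y) : 0 < ∑ y', exp (θ y') :=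
  Finset.sum_pos (fun _ _ => exp_pos _) ⟨y, Finset.mem_univ y⟩

lemma softmax_pos (θ : Y → ℝ) (y : Y) : 0 < softmax θ y :=
  div_pos (exp_pos _) (sum_exp_pos θ y)

lemma log_softmax (θ : Y → ℝ) (y : Y) :
    Real.log (softmax θ y) = θ y - Real.log (∑ y', exp (θ y')) := by
  rw [softmax, Real.log_div (exp_ne_zero _) (sum_exp_pos θ y).ne', log_exp]

lemma ipoMargin_eq (θref θ : Y → ℝ) (y y' : Y) :
    ipoMargin θref θ y y' =
      θ y - θ y' + (Real.log (softmax θref y') - Real.log (softmax θref y)) := by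
  have hθ := softmax_pos θ
  have hθref := softmax_pos θref
  rw [ipoMargin, Real.log_div (mul_pos (hθ y) (hθref y')).ne' (mul_pos (hθ y') (hθref y)).ne',
    Real.log_mul (hθ y).ne' (hθref y').ne', Real.log_mul (hθ y').ne' (hθref y).ne',
    log_softmax θ y, log_softmax θ y']
  ring

lemma hasFDerivAt_ipoMargin (θref θ : Y → ℝ) (y y' : Y) :
    HasFDerivAt (ipoMargin θref · y y')
      ((ContinuousLinearMap.proj y : (Y → ℝ) →L[ℝ] ℝ) - ContinuousLinearMap.proj y') θ := by
  simp_rw [ipoMargin_eq]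
  exact ((ContinuousLinearMap.proj (R := ℝ) (φ := fun _ : Y => ℝ) y).hasFDerivAt.sub
    (ContinuousLinearMap.proj (R := ℝ) (φ := fun _ : Y => ℝ) y').hasFDerivAt).add_const _

lemma fderiv_LIPO_apply (P : Y → Y → ℝ) (β : ℝ) (θref μdist θ v : Y → ℝ) :
    fderiv ℝ (LIPO P β θref μdist) θ v = ((Fintype.card Y : ℝ)⁻¹) ^ 2 *
      ∑ y, ∑ y', 2 * (ipoMargin θref θ y y' - ipoTarget β μdist P y y') * (v y - v y') := by
  have hLIPO : LIPO P β θref μdist = fun θ => ((Fintype.card Y : ℝ)⁻¹) ^ 2 *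
      ∑ y, ∑ y', (ipoMargin θref θ y y' - ipoTarget β μdist P y y') ^ 2 := rfl
  have hderiv := (HasFDerivAt.fun_sum (u := .univ) fun y _ =>
    HasFDerivAt.fun_sum (u := .univ) fun y' _ =>
      ((hasFDerivAt_ipoMargin θref θ y y').sub_const (ipoTarget β μdist P y y')).pow 2).const_mul
        (((Fintype.card Y : ℝ)⁻¹) ^ 2)
  rw [hLIPO, hderiv.fderiv]
  simp [Finset.mul_sum]

lemma LhatIPO_eq_LIPO_add {β : ℝ} {μdist : Y → ℝ} (hμ : ∑ y, μdist y = 1) (θref : Y → ℝ)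
    (J : Y → Y → ℝ) (θ : Y → ℝ) :
    LhatIPO β θref μdist J θ = LIPO J β θref μdist θ + ((Fintype.card Y : ℝ)⁻¹) ^ 2 *
      ∑ y, ∑ y', (∑ y'', μdist y'' * ((J y y'' - J y' y'') / β) ^ 2
        - (∑ y'', μdist y'' * ((J y y'' - J y' y'') / β)) ^ 2) := by
  have hmean : ∀ y y', ∑ y'', μdist y'' * ((J y y'' - J y' y'') / β) = ipoTarget β μdist J y y' := by
    intro y y'
    simp only [ipoTarget, Finset.mul_sum]
    exact Finset.sum_congr rfl fun _ _ => by ring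
  simp only [LhatIPO, LIPO, ← mul_add, ← Finset.sum_add_distrib]
  congr 1
  refine Finset.sum_congr rfl fun y _ => Finset.sum_congr rfl fun y' _ => ?_
  rw [Finset.sum_mul_sub_sq_eq Finset.univ μdist _ hμ, hmean]
  rfl

lemma fderiv_LhatIPO {β : ℝ} {μdist : Y → ℝ} (hμ : ∑ y, μdist y = 1) (θref : Y → ℝ)
    (J : Y → Y → ℝ) :
    fderiv ℝ (LhatIPO β θref μdist J) = fderiv ℝ (LIPO J β θref μdist) := by
  rw [funext (LhatIPO_eq_LIPO_add hμ θref J)]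
  funext θ
  exact fderiv_add_const _

variable {Ω : Type*} [MeasurableSpace Ω] {μp : Measure Ω} {I : Ω → Y → Y → ℝ}

lemma integrable_ipoTarget (hI : ∀ y y'', Integrable (fun ω => I ω y y'') μp)
    (β : ℝ) (μdist : Y → ℝ) (y y' : Y) :
    Integrable (fun ω => ipoTarget β μdist (I ω) y y') μp :=
  (integrable_finsetSum _ fun y'' _ =>
    ((hI y y'').sub (hI y' y'')).const_mul (μdist y'')).const_mul _

lemma integral_ipoTarget (hI : ∀ y y'', Integrable (fun ω => I ω y y'') μp)
    {P : Y → Y → ℝ} (hIP : ∀ y y'', ∫ ω, I ω y y'' ∂μp = P y y'')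
    (β : ℝ) (μdist : Y → ℝ) (y y' : Y) :
    ∫ ω, ipoTarget β μdist (I ω) y y' ∂μp = ipoTarget β μdist P y y' := by
  have hterm : ∀ y'', Integrable (fun ω => μdist y'' * (I ω y y'' - I ω y' y'')) μp :=
    fun y'' => ((hI y y'').sub (hI y' y'')).const_mul _
  simp only [ipoTarget]
  rw [integral_const_mul, integral_finsetSum _ fun y'' _ => hterm y'']
  simp only [integral_const_mul, integral_sub (hI _ _) (hI _ _), hIP]

lemma integral_fderiv_LIPO_apply [IsProbabilityMeasure μp]
    (hI : ∀ y y'', Integrable (fun ω => I ω y y'') μp)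
    {P : Y → Y → ℝ} (hIP : ∀ y y'', ∫ ω, I ω y y'' ∂μp = P y y'')
    (β : ℝ) (θref μdist θ v : Y → ℝ) :
    ∫ ω, fderiv ℝ (LIPO (I ω) β θref μdist) θ v ∂μp = fderiv ℝ (LIPO P β θref μdist) θ v := by
  have hterm : ∀ y y', Integrable (fun ω => 2 * (ipoMargin θref θ y y' -
      ipoTarget β μdist (I ω) y y') * (v y - v y')) μp := fun y y' =>
    (((integrable_const _).sub (integrable_ipoTarget hI β μdist y y')).const_mul 2).mul_const _
  simp only [fderiv_LIPO_apply]
  rw [integral_const_mul,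
    integral_finsetSum _ fun y _ => integrable_finsetSum _ fun y' _ => hterm y y']
  congr 1
  refine Finset.sum_congr rfl fun y _ => ?_
  rw [integral_finsetSum _ fun y' _ => hterm y y']
  refine Finset.sum_congr rfl fun y' _ => ?_
  rw [integral_mul_const, integral_const_mul, integral_sub (integrable_const _)
    (integrable_ipoTarget hI β μdist y y'), integral_const, integral_ipoTarget hI hIP]
  simp

end IPOLoss

open MeasureTheory in
theorem pop_ipo_loss_gradient_unbiased_general
    {Y : Type*} [Fintype Y]
    (P : Y → Y → ℝ)
    (β : ℝ)
    (θref : Y → ℝ)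
    {Ω : Type*} [MeasurableSpace Ω] (μp : Measure Ω) [IsProbabilityMeasure μp]
    (μdist : Y → ℝ) (hμdist : (∀ y, 0 ≤ μdist y) ∧ ∑ y, μdist y = 1)
    (I : Ω → Y → Y → ℝ)
    (hIint : ∀ y y'', Integrable (fun ω => I ω y y'') μp)
    (hIunbiased : ∀ y y'', ∫ ω, I ω y y'' ∂μp = P y y'')
    (θ : Y → ℝ) (v : Y → ℝ) :
    ∫ ω, fderiv ℝ (LhatIPO β θref μdist (I ω)) θ v ∂μp
      = fderiv ℝ (LIPO P β θref μdist) θ v := by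
  simp only [fderiv_LhatIPO hμdist.2]
  exact integral_fderiv_LIPO_apply hIint hIunbiased β θref μdist θ v

open MeasureTheory in
/-- the gradient of the population IPO loss is an unbiased estimator of the
gradient of the generalized online IPO loss:
`E[∇_θ L̂(θ; π^s, μ)] = ∇_θ L_IPO(θ; π^s, μ)`. -/
theorem pop_ipo_loss_gradient_unbiased
    {Y : Type*} [Fintype Y] (hY : 2 ≤ Fintype.card Y)
    (P : Y → Y → ℝ)
    (hP0 : ∀ y y', 0 ≤ P y y') (hP1 : ∀ y y', P y y' ≤ 1)
    (hPsum : ∀ y y', P y y' + P y' y = 1)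
    (β : ℝ) (hβ : 0 < β)
    (θref : Y → ℝ)
    {Ω : Type*} [MeasurableSpace Ω] (μp : Measure Ω) [IsProbabilityMeasure μp]
    (μdist : Y → ℝ) (hμdist : (∀ y, 0 ≤ μdist y) ∧ ∑ y, μdist y = 1)
    (I : Ω → Y → Y → ℝ)
    (hIint : ∀ y y'', Integrable (fun ω => I ω y y'') μp)
    (hIunbiased : ∀ y y'', ∫ ω, I ω y y'' ∂μp = P y y'')
    (θ : Y → ℝ) (v : Y → ℝ) :
    ∫ ω, fderiv ℝ (LhatIPO β θref μdist (I ω)) θ v ∂μp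
      = fderiv ℝ (LIPO P β θref μdist) θ v :=
  pop_ipo_loss_gradient_unbiased_general P β θref μp μdist hμdist I hIint hIunbiased θ v
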